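/- arXiv:2102.06810 — 8 statements merged into one kernel-verified Lean document; each statement's English description precedes it below -/
import Mathlib

section
/- Let n1, n2 be positive natural numbers, let X, X' be real n1×n1 matrices, let α_p > 0 and η be real constants, and let W : ℝ → Mat(n2×n1, ℝ), W_p : ℝ → Mat(n2×n2, ℝ), W_a : ℝ → Mat(n2×n1, ℝ) be differentiable matrix-valued functions satisfying for all t the differential equations Ẇ_p(t) = α_p(−W_p(t)W(t)(X+X') + W_a(t)X)W(t)ᵀ − η W_p(t) and Ẇ(t) = W_p(t)ᵀ(−W_p(t)W(t)(X+X') + W_a(t)X) − η W(t). Then for all t, W(t)W(t)ᵀ − α_p⁻¹ W_p(t)ᵀW_p(t) = e^{−2ηt}·(W(0)W(0)ᵀ − α_p⁻¹ W_p(0)ᵀW_p(0)); in particular the difference W(t)W(t)ᵀ − α_p⁻¹ W_p(t)ᵀW_p(t) decays as e^{−2ηt} independently of the evolution of W_a. -/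
open Matrix
attribute [local instance] Matrix.frobeniusNormedAddCommGroup Matrix.frobeniusNormedSpace

/-!
Under the flow, `W Wᵀ` and `αp⁻¹ Wpᵀ Wp` receive the same gradient contribution
`Wpᵀ M Wᵀ + W Mᵀ Wp` (with `M = -Wp W (X + X') + Wa X`), so their difference only feels the
weight decay: it solves the scalar linear equation `A' = -2η A`, whose solutions are
`A t = e^{-2ηt} A 0`.
-/

section MatrixCalculus

variable {𝕜 : Type*} [NontriviallyNormedField 𝕜] [CompleteSpace 𝕜]
  {l m n : Type*} [Fintype l] [Fintype m] [Fintype n]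

theorem HasDerivAt.matrix_mul {f : 𝕜 → Matrix l m 𝕜} {g : 𝕜 → Matrix m n 𝕜}
    {f' : Matrix l m 𝕜} {g' : Matrix m n 𝕜} {t : 𝕜}
    (hf : HasDerivAt f f' t) (hg : HasDerivAt g g' t) :
    HasDerivAt (fun s => f s * g s) (f' * g t + f t * g') t := by
  rw [add_comm]
  exact ((mulLinearMap 𝕜).toContinuousBilinearMap).hasDerivAt_of_bilinear
    (fun _ => hf) (fun _ => hg)

theorem HasDerivAt.matrix_transpose {f : 𝕜 → Matrix m n 𝕜} {f' : Matrix m n 𝕜} {t : 𝕜}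
    (hf : HasDerivAt f f' t) :
    HasDerivAt (fun s => (f s)ᵀ) f'ᵀ t :=
  ((transposeLinearEquiv m n 𝕜 𝕜).toContinuousLinearEquiv :
    Matrix m n 𝕜 →L[𝕜] Matrix n m 𝕜).hasFDerivAt.comp_hasDerivAt t hf

theorem hasDerivAt_balance {αp η t : 𝕜} (hαp : αp ≠ 0)
    {W : 𝕜 → Matrix m n 𝕜} {Wp : 𝕜 → Matrix m m 𝕜} (M : Matrix m n 𝕜)
    (hW : HasDerivAt W ((Wp t)ᵀ * M - η • W t) t)
    (hWp : HasDerivAt Wp (αp • (M * (W t)ᵀ) - η • Wp t) t) :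
    HasDerivAt (fun s => W s * (W s)ᵀ - αp⁻¹ • ((Wp s)ᵀ * Wp s))
      ((-2 * η) • (W t * (W t)ᵀ - αp⁻¹ • ((Wp t)ᵀ * Wp t))) t := by
  refine ((hW.matrix_mul hW.matrix_transpose).sub
    ((hWp.matrix_transpose.matrix_mul hWp).const_smul αp⁻¹)).congr_deriv ?_
  simp only [transpose_sub, transpose_smul, transpose_mul, transpose_transpose,
    Matrix.sub_mul, Matrix.mul_sub, Matrix.smul_mul, Matrix.mul_smul, smul_sub, smul_add,
    smul_smul, inv_mul_cancel₀ hαp, one_smul, Matrix.mul_assoc]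
  module

end MatrixCalculus

theorem eq_exp_mul_smul_of_hasDerivAt {E : Type*} [NormedAddCommGroup E] [NormedSpace ℝ E]
    {f : ℝ → E} {c : ℝ} (hf : ∀ t, HasDerivAt f (c • f t) t) (t : ℝ) :
    f t = Real.exp (c * t) • f 0 := by
  have hdamped : ∀ s, HasDerivAt (fun s => Real.exp (-c * s) • f s) 0 s := by
    intro s
    have hexp : HasDerivAt (fun s => Real.exp (-c * s)) (Real.exp (-c * s) * -c) s := by
      simpa only [mul_one] using ((hasDerivAt_id' s).const_mul (-c)).exp
    refine (hexp.smul (hf s)).congr_deriv ?_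
    rw [smul_smul, ← add_smul, mul_neg, mul_comm, add_neg_cancel, zero_smul]
  have hconst := is_const_of_deriv_eq_zero (fun s => (hdamped s).differentiableAt)
    (fun s => (hdamped s).deriv) t 0
  calc f t = Real.exp (c * t) • Real.exp (-c * t) • f t := by
        rw [smul_smul, ← Real.exp_add, ← add_mul, add_neg_cancel, zero_mul, Real.exp_zero,
          one_smul]
    _ = Real.exp (c * t) • f 0 := by simpa using congrArg (Real.exp (c * t) • ·) hconst

theorem byol_weight_balance_invariance_general
    (n1 n2 : ℕ)
    (X X' : Matrix (Fin n1) (Fin n1) ℝ)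
    (αp η : ℝ) (hαp : 0 < αp)
    (W Wa : ℝ → Matrix (Fin n2) (Fin n1) ℝ)
    (Wp : ℝ → Matrix (Fin n2) (Fin n2) ℝ)
    (hWp : ∀ t : ℝ, HasDerivAt Wp
      (αp • ((-(Wp t * W t * (X + X')) + Wa t * X) * (W t)ᵀ) - η • Wp t) t)
    (hW : ∀ t : ℝ, HasDerivAt W
      ((Wp t)ᵀ * (-(Wp t * W t * (X + X')) + Wa t * X) - η • W t) t) :
    ∀ t : ℝ,
      W t * (W t)ᵀ - αp⁻¹ • ((Wp t)ᵀ * Wp t)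
        = Real.exp (-2 * η * t) • (W 0 * (W 0)ᵀ - αp⁻¹ • ((Wp 0)ᵀ * Wp 0)) :=
  eq_exp_mul_smul_of_hasDerivAt fun t => hasDerivAt_balance hαp.ne' _ (hW t) (hWp t)

theorem byol_weight_balance_invariance
    (n1 n2 : ℕ) (hn1 : 0 < n1) (hn2 : 0 < n2)
    (X X' : Matrix (Fin n1) (Fin n1) ℝ)
    (αp η : ℝ) (hαp : 0 < αp)
    (W Wa : ℝ → Matrix (Fin n2) (Fin n1) ℝ)
    (Wp : ℝ → Matrix (Fin n2) (Fin n2) ℝ)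
    (hWp : ∀ t : ℝ, HasDerivAt Wp
      (αp • ((-(Wp t * W t * (X + X')) + Wa t * X) * (W t)ᵀ) - η • Wp t) t)
    (hW : ∀ t : ℝ, HasDerivAt W
      ((Wp t)ᵀ * (-(Wp t * W t * (X + X')) + Wa t * X) - η • W t) t) :
    ∀ t : ℝ,
      W t * (W t)ᵀ - αp⁻¹ • ((Wp t)ᵀ * Wp t)
        = Real.exp (-2 * η * t) • (W 0 * (W 0)ᵀ - αp⁻¹ • ((Wp 0)ᵀ * Wp 0)) :=
  byol_weight_balance_invariance_general n1 n2 X X' αp η hαp W Wa Wp hWp hW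
end

section
/- Let n1, n2 be positive natural numbers, let X, X' be real symmetric positive semidefinite n1×n1 matrices, let η ≥ 0 and λ₀ > 0, let W_p : ℝ → Mat(n2×n2, ℝ) be any matrix-valued function, and let W : ℝ → Mat(n2×n1, ℝ) be differentiable satisfying for all t ≥ 0 the equation Ẇ(t) = −(W_p(t)ᵀW_p(t) + I)W(t)X' − (W_p(t) − I)ᵀ(W_p(t) − I)W(t)X − η W(t). Assume that for all t ≥ 0 and all V ∈ Mat(n2×n1, ℝ), tr(Vᵀ((W_p(t)ᵀW_p(t) + I)V X' + (W_p(t) − I)ᵀ(W_p(t) − I)V X)) + η‖V‖_F² ≥ λ₀‖V‖_F². Then ‖W(t)‖_F ≤ e^{−λ₀ t}‖W(0)‖_F for all t ≥ 0, so W(t) → 0. -/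
/-!
Along a trajectory, `g(t) = tr(WᵀW) = ‖W‖_F²` has derivative `2 tr(Wᵀ Ẇ)`, and substituting the
dynamics turns this into minus twice the quadratic form in the positivity hypothesis. Hence
`g' ≤ -2λ₀ g`, Grönwall's inequality gives `g(t) ≤ e^{-2λ₀ t} g(0)`, and taking square roots
gives the Frobenius-norm bound, which forces `W(t) → 0`.
-/

open Matrix

attribute [local instance] Matrix.frobeniusNormedAddCommGroup Matrix.frobeniusNormedSpace

open Real Filter Topology

theorem le_mul_exp_of_hasDerivAt_le_mul {g g' : ℝ → ℝ} {K : ℝ}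
    (hg : ∀ t, 0 ≤ t → HasDerivAt g (g' t) t) (hbound : ∀ t, 0 ≤ t → g' t ≤ K * g t)
    {t : ℝ} (ht : 0 ≤ t) : g t ≤ g 0 * exp (K * t) := by
  have := le_gronwallBound_of_liminf_deriv_right_le (f' := g') (δ := g 0) (K := K) (ε := 0)
    (a := 0) (b := t)
    (fun s hs => (hg s hs.1).continuousAt.continuousWithinAt)
    (fun s hs _ hr => (hg s hs.1).hasDerivWithinAt.liminf_right_slope_le hr) le_rfl
    (fun s hs => by simpa using hbound s hs.1) t ⟨ht, le_rfl⟩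
  simpa [gronwallBound_ε0] using this

theorem tendsto_nhds_zero_of_norm_le_exp_mul {E : Type*} [SeminormedAddCommGroup E]
    {f : ℝ → E} {c C : ℝ} (hc : 0 < c) (hf : ∀ t, 0 ≤ t → ‖f t‖ ≤ exp (-c * t) * C) :
    Tendsto f atTop (𝓝 0) := by
  have hexp : Tendsto (fun t => exp (-c * t) * C) atTop (𝓝 0) := by
    simpa using ((tendsto_exp_atBot.comp
      (tendsto_id.const_mul_atTop_of_neg (neg_neg_of_pos hc))).mul_const C)
  refine squeeze_zero_norm' ?_ hexp
  filter_upwards [eventually_ge_atTop 0] with t ht using hf t ht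

namespace Matrix

variable {m n : Type*} [Fintype m] [Fintype n]

def frobeniusPairing : Matrix m n ℝ →ₗ[ℝ] Matrix m n ℝ →ₗ[ℝ] ℝ :=
  LinearMap.mk₂ ℝ (fun A B => trace (Aᵀ * B))
    (fun _ _ _ => by simp [Matrix.add_mul]) (fun _ _ _ => by simp)
    (fun _ _ _ => by simp [Matrix.mul_add]) (fun _ _ _ => by simp)

theorem trace_transpose_mul_comm (A B : Matrix m n ℝ) : trace (Aᵀ * B) = trace (Bᵀ * A) := by
  rw [← trace_transpose, transpose_mul, transpose_transpose]

theorem trace_transpose_mul_self_eq_frobenius_norm_sq (A : Matrix m n ℝ) :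
    trace (Aᵀ * A) = ‖A‖ ^ 2 := by
  rw [frobenius_norm_def, ← sqrt_eq_rpow, sq_sqrt (by positivity), Finset.sum_comm]
  simp [trace, mul_apply, sq]

theorem _root_.HasDerivAt.trace_transpose_mul_self {W : ℝ → Matrix m n ℝ} {W' : Matrix m n ℝ}
    {t : ℝ} (hW : HasDerivAt W W' t) :
    HasDerivAt (fun s => trace ((W s)ᵀ * W s)) (2 * trace ((W t)ᵀ * W')) t := by
  refine (frobeniusPairing.toContinuousBilinearMap.hasDerivAt_of_bilinear (fun _ => hW)
    (fun _ => hW)).congr_deriv ?_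
  -- `toContinuousBilinearMap` carries the product topology, so its values are only reached by `change`
  change trace ((W t)ᵀ * W') + trace (W'ᵀ * W t) = _
  rw [trace_transpose_mul_comm W', two_mul]

theorem frobenius_norm_le_exp_mul_of_trace_deriv_le {W W' : ℝ → Matrix m n ℝ} {c : ℝ}
    (hW : ∀ t, 0 ≤ t → HasDerivAt W (W' t) t)
    (hdiss : ∀ t, 0 ≤ t → trace ((W t)ᵀ * W' t) ≤ -c * trace ((W t)ᵀ * W t))
    {t : ℝ} (ht : 0 ≤ t) : ‖W t‖ ≤ exp (-c * t) * ‖W 0‖ := by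
  have hsq := le_mul_exp_of_hasDerivAt_le_mul (K := -2 * c)
    (fun s hs => (hW s hs).trace_transpose_mul_self) (fun s hs => by linarith [hdiss s hs]) ht
  simp only [trace_transpose_mul_self_eq_frobenius_norm_sq] at hsq
  rw [← pow_le_pow_iff_left₀ (norm_nonneg _) (by positivity) two_ne_zero]
  calc ‖W t‖ ^ 2 ≤ ‖W 0‖ ^ 2 * exp (-2 * c * t) := hsq
    _ = (exp (-c * t) * ‖W 0‖) ^ 2 := by rw [mul_pow, ← exp_nat_mul]; ring_nf

end Matrix

theorem no_stop_gradient_collapse_general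
    (n1 n2 : ℕ)
    (X X' : Matrix (Fin n1) (Fin n1) ℝ)
    (η lam : ℝ) (hlam : 0 < lam)
    (Wp : ℝ → Matrix (Fin n2) (Fin n2) ℝ)
    (W : ℝ → Matrix (Fin n2) (Fin n1) ℝ)
    (hW : ∀ t : ℝ, 0 ≤ t → HasDerivAt W
      (-(((Wp t)ᵀ * Wp t + 1) * W t * X')
        - ((Wp t - 1)ᵀ * (Wp t - 1)) * W t * X - η • W t) t)
    (hbound : ∀ t : ℝ, 0 ≤ t → ∀ V : Matrix (Fin n2) (Fin n1) ℝ,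
      lam * Matrix.trace (Vᵀ * V) ≤
        Matrix.trace (Vᵀ * (((Wp t)ᵀ * Wp t + 1) * V * X'
            + ((Wp t - 1)ᵀ * (Wp t - 1)) * V * X))
          + η * Matrix.trace (Vᵀ * V)) :
    (∀ t : ℝ, 0 ≤ t →
        Real.sqrt (Matrix.trace ((W t)ᵀ * W t)) ≤
          Real.exp (-lam * t) * Real.sqrt (Matrix.trace ((W 0)ᵀ * W 0)))
      ∧ Filter.Tendsto W Filter.atTop (nhds 0) := by
  have hdiss : ∀ t, 0 ≤ t → trace ((W t)ᵀ * (-(((Wp t)ᵀ * Wp t + 1) * W t * X')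
      - ((Wp t - 1)ᵀ * (Wp t - 1)) * W t * X - η • W t)) ≤ -lam * trace ((W t)ᵀ * W t) := by
    intro t ht
    have := hbound t ht (W t)
    simp only [Matrix.mul_sub, Matrix.mul_neg, Matrix.mul_add, Matrix.mul_smul, trace_sub,
      trace_neg, trace_add, trace_smul, smul_eq_mul] at this ⊢
    linarith
  have hdecay : ∀ t, 0 ≤ t → ‖W t‖ ≤ exp (-lam * t) * ‖W 0‖ :=
    fun _ ht => frobenius_norm_le_exp_mul_of_trace_deriv_le hW hdiss ht
  refine ⟨fun t ht => ?_, tendsto_nhds_zero_of_norm_le_exp_mul hlam hdecay⟩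
  simpa only [trace_transpose_mul_self_eq_frobenius_norm_sq, Real.sqrt_sq (norm_nonneg _)]
    using hdecay t ht

theorem no_stop_gradient_collapse
    (n1 n2 : ℕ) (hn1 : 0 < n1) (hn2 : 0 < n2)
    (X X' : Matrix (Fin n1) (Fin n1) ℝ) (hX : X.PosSemidef) (hX' : X'.PosSemidef)
    (η lam : ℝ) (hη : 0 ≤ η) (hlam : 0 < lam)
    (Wp : ℝ → Matrix (Fin n2) (Fin n2) ℝ)
    (W : ℝ → Matrix (Fin n2) (Fin n1) ℝ)
    (hW : ∀ t : ℝ, 0 ≤ t → HasDerivAt W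
      (-(((Wp t)ᵀ * Wp t + 1) * W t * X')
        - ((Wp t - 1)ᵀ * (Wp t - 1)) * W t * X - η • W t) t)
    (hbound : ∀ t : ℝ, 0 ≤ t → ∀ V : Matrix (Fin n2) (Fin n1) ℝ,
      lam * Matrix.trace (Vᵀ * V) ≤
        Matrix.trace (Vᵀ * (((Wp t)ᵀ * Wp t + 1) * V * X'
            + ((Wp t - 1)ᵀ * (Wp t - 1)) * V * X))
          + η * Matrix.trace (Vᵀ * V)) :
    (∀ t : ℝ, 0 ≤ t →
        Real.sqrt (Matrix.trace ((W t)ᵀ * W t)) ≤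
          Real.exp (-lam * t) * Real.sqrt (Matrix.trace ((W 0)ᵀ * W 0)))
      ∧ Filter.Tendsto W Filter.atTop (nhds 0) :=
  no_stop_gradient_collapse_general n1 n2 X X' η lam hlam Wp W hW hbound
end

section
/- Let n1, n2 be positive natural numbers, let X' be a real symmetric positive semidefinite n1×n1 matrix, let η > 0, and let W : ℝ → Mat(n2×n1, ℝ) be differentiable satisfying Ẇ(t) = −W(t)(X' + ηI) for all t ≥ 0. Then ‖W(t)‖_F ≤ e^{−η t}‖W(0)‖_F for all t ≥ 0, so W(t) → 0. -/
/-!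
The squared Frobenius norm `N = tr(WᵀW)` satisfies `N' = 2 tr(WᵀẆ) = -2 tr(WᵀW X') - 2η N`,
and `tr(WᵀW X') = tr(W X' Wᵀ) ≥ 0` because `W X' Wᵀ` is positive semidefinite.
Hence `N' ≤ -2η N`, so `e^{2ηt} N(t)` is antitone and `N(t) ≤ e^{-2ηt} N(0)`.
-/

open Matrix

attribute [local instance] Matrix.frobeniusNormedAddCommGroup Matrix.frobeniusNormedSpace

open Real Set Filter Topology

lemma le_exp_mul_of_hasDerivAt_le_mul {f f' : ℝ → ℝ} {c : ℝ}
    (hf : ∀ t, 0 ≤ t → HasDerivAt f (f' t) t) (hf' : ∀ t, 0 ≤ t → f' t ≤ c * f t)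
    {t : ℝ} (ht : 0 ≤ t) : f t ≤ exp (c * t) * f 0 := by
  set g : ℝ → ℝ := fun s => exp (-c * s) * f s with hg_def
  have hg : ∀ s, 0 ≤ s → HasDerivAt g (exp (-c * s) * (f' s - c * f s)) s := fun s hs =>
    (((hasDerivAt_id' s).const_mul (-c)).exp.fun_mul (hf s hs)).congr_deriv (by ring)
  have hg_anti : AntitoneOn g (Ici 0) := by
    refine antitoneOn_of_hasDerivWithinAt_nonpos (convex_Ici 0)
      (fun s hs => (hg s hs).continuousAt.continuousWithinAt)
      (fun s hs => (hg s (interior_subset hs)).hasDerivWithinAt) fun s hs => ?_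
    exact mul_nonpos_of_nonneg_of_nonpos (exp_pos _).le
      (sub_nonpos.mpr (hf' s (interior_subset hs)))
  have hgt : g t ≤ g 0 := hg_anti self_mem_Ici ht ht
  rw [← div_le_iff₀' (exp_pos _), div_eq_inv_mul, ← Real.exp_neg, ← neg_mul]
  simpa [hg_def] using hgt

section Trace

variable {m n : Type*} [Fintype m] [Fintype n]

lemma trace_transpose_mul_self_mul_nonneg (A : Matrix m n ℝ) {X : Matrix n n ℝ}
    (hX : X.PosSemidef) : 0 ≤ trace (Aᵀ * A * X) := by
  rw [Matrix.mul_assoc, trace_mul_comm, ← conjTranspose_eq_transpose_of_trivial]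
  exact (hX.mul_mul_conjTranspose_same A).trace_nonneg

lemma mul_trace_transpose_mul_self_le [DecidableEq n] (A : Matrix m n ℝ) {X : Matrix n n ℝ}
    (hX : X.PosSemidef) (η : ℝ) :
    η * trace (Aᵀ * A) ≤ trace (Aᵀ * (A * (X + η • 1))) := by
  have hsplit : trace (Aᵀ * (A * (X + η • 1))) = trace (Aᵀ * A * X) + η * trace (Aᵀ * A) := by
    rw [Matrix.mul_add, Matrix.mul_add, Matrix.mul_smul, Matrix.mul_one, Matrix.mul_smul,
      trace_add, trace_smul, smul_eq_mul, Matrix.mul_assoc]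
  linarith [trace_transpose_mul_self_mul_nonneg A hX]

lemma trace_transpose_mul_self_eq_sum_sq (A : Matrix m n ℝ) :
    trace (Aᵀ * A) = ∑ i, ∑ j, A i j ^ 2 := by
  simp only [trace, diag, mul_apply, transpose_apply, sq]
  exact Finset.sum_comm

lemma frobenius_norm_eq_sqrt_trace (A : Matrix m n ℝ) : ‖A‖ = √(trace (Aᵀ * A)) := by
  rw [frobenius_norm_def, trace_transpose_mul_self_eq_sum_sq, sqrt_eq_rpow]
  simp only [norm_eq_abs, rpow_two, sq_abs]

lemma hasDerivAt_trace_transpose_mul_self {W : ℝ → Matrix m n ℝ} {W' : Matrix m n ℝ} {t : ℝ}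
    (hW : HasDerivAt W W' t) :
    HasDerivAt (fun s => trace ((W s)ᵀ * W s)) (2 * trace ((W t)ᵀ * W')) t := by
  let B : Matrix m n ℝ →ₗ[ℝ] Matrix m n ℝ →ₗ[ℝ] ℝ := LinearMap.mk₂ ℝ (fun A C => trace (Aᵀ * C))
    (fun _ _ _ => by rw [transpose_add, Matrix.add_mul, trace_add])
    (fun _ _ _ => by rw [transpose_smul, Matrix.smul_mul, trace_smul])
    (fun _ _ _ => by rw [Matrix.mul_add, trace_add])
    (fun _ _ _ => by rw [Matrix.mul_smul, trace_smul])
  refine (B.toContinuousBilinearMap.hasDerivAt_of_bilinear (fun _ => hW) fun _ => hW).congr_deriv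
    ?_
  change trace ((W t)ᵀ * W') + trace ((W')ᵀ * W t) = _
  rw [← trace_transpose ((W')ᵀ * W t), transpose_mul, transpose_transpose]
  ring

end Trace

theorem no_predictor_collapse_general
    (n1 n2 : ℕ)
    (X' : Matrix (Fin n1) (Fin n1) ℝ) (hX' : X'.PosSemidef)
    (η : ℝ) (hη : 0 < η)
    (W : ℝ → Matrix (Fin n2) (Fin n1) ℝ)
    (hW : ∀ t : ℝ, 0 ≤ t →
      HasDerivAt W (-(W t * (X' + η • (1 : Matrix (Fin n1) (Fin n1) ℝ)))) t) :
    (∀ t : ℝ, 0 ≤ t →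
        Real.sqrt (Matrix.trace ((W t)ᵀ * W t)) ≤
          Real.exp (-η * t) * Real.sqrt (Matrix.trace ((W 0)ᵀ * W 0)))
      ∧ Filter.Tendsto W Filter.atTop (nhds 0) := by
  have hsq_decay : ∀ t, 0 ≤ t →
      trace ((W t)ᵀ * W t) ≤ exp (-(2 * η) * t) * trace ((W 0)ᵀ * W 0) :=
    fun t ht => le_exp_mul_of_hasDerivAt_le_mul
      (fun s hs => hasDerivAt_trace_transpose_mul_self (hW s hs))
      (fun s _ => by
        rw [Matrix.mul_neg, trace_neg]
        linarith [mul_trace_transpose_mul_self_le (W s) hX' η]) ht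
  have hdecay : ∀ t, 0 ≤ t →
      √(trace ((W t)ᵀ * W t)) ≤ exp (-η * t) * √(trace ((W 0)ᵀ * W 0)) := by
    intro t ht
    have hexp : exp (-(2 * η) * t) = exp (-η * t) ^ 2 := by rw [sq, ← Real.exp_add]; ring_nf
    calc √(trace ((W t)ᵀ * W t)) ≤ √(exp (-η * t) ^ 2 * trace ((W 0)ᵀ * W 0)) :=
          sqrt_le_sqrt (hexp ▸ hsq_decay t ht)
      _ = exp (-η * t) * √(trace ((W 0)ᵀ * W 0)) := by
          rw [sqrt_mul (sq_nonneg _), sqrt_sq (exp_pos _).le]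
  refine ⟨hdecay, tendsto_zero_iff_norm_tendsto_zero.mpr ?_⟩
  have hlim : Tendsto (fun t => exp (-η * t) * √(trace ((W 0)ᵀ * W 0))) atTop (𝓝 0) := by
    simpa [neg_mul] using
      (tendsto_exp_neg_atTop_nhds_zero.comp (tendsto_id.const_mul_atTop hη)).mul_const
        (√(trace ((W 0)ᵀ * W 0)))
  refine squeeze_zero' (.of_forall fun t => norm_nonneg _) ?_ hlim
  filter_upwards [eventually_ge_atTop 0] with t ht
  rw [frobenius_norm_eq_sqrt_trace]
  exact hdecay t ht

theorem no_predictor_collapse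
    (n1 n2 : ℕ) (hn1 : 0 < n1) (hn2 : 0 < n2)
    (X' : Matrix (Fin n1) (Fin n1) ℝ) (hX' : X'.PosSemidef)
    (η : ℝ) (hη : 0 < η)
    (W : ℝ → Matrix (Fin n2) (Fin n1) ℝ)
    (hW : ∀ t : ℝ, 0 ≤ t →
      HasDerivAt W (-(W t * (X' + η • (1 : Matrix (Fin n1) (Fin n1) ℝ)))) t) :
    (∀ t : ℝ, 0 ≤ t →
        Real.sqrt (Matrix.trace ((W t)ᵀ * W t)) ≤
          Real.exp (-η * t) * Real.sqrt (Matrix.trace ((W 0)ᵀ * W 0)))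
      ∧ Filter.Tendsto W Filter.atTop (nhds 0) :=
  no_predictor_collapse_general n1 n2 X' hX' η hη W hW
end

section
/- Let n be a positive natural number, let α_p, σ, η be real constants, let τ : ℝ → ℝ, and let W_p, F : ℝ → Mat(n×n, ℝ) be differentiable matrix-valued functions satisfying for all t the symmetrized dynamics Ẇ_p(t) = −(α_p/2)(1+σ²)(W_p(t)F(t) + F(t)W_p(t)) + α_p τ(t) F(t) − η W_p(t) and Ḟ(t) = −(1+σ²)(W_p(t)²F(t) + F(t)W_p(t)²) + τ(t)(W_p(t)F(t) + F(t)W_p(t)) − 2η F(t). Then the commutator L(t) := F(t)W_p(t) − W_p(t)F(t) satisfies for all t the equation L̇(t) = −L(t)K(t) − K(t)L(t), where K(t) = (1+σ²)((α_p/2)F(t) + W_p(t)²) − τ(t)W_p(t) + (3/2)η I. -/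
/-!
Write `⁅X, Y⁆ = XY - YX`, `{X, Y} = XY + YX` and `L = ⁅F, W_p⁆`. By the product rule
`L̇ = ⁅Ḟ, W_p⁆ + ⁅F, Ẇ_p⁆`. If `c` commutes with `a` then `⁅a, {b, c}⁆ = {c, ⁅a, b⁆}`, and
symmetrically on the other side; since every term of `Ḟ` and `Ẇ_p` is a multiple of `F`, of `W_p`
or an anticommutator of `F` with `W_p` or `W_p²`, each commutator becomes an anticommutator with
`L`, and collecting them gives `L̇ = -{K, L}`.
-/

open Matrix

attribute [local instance] Matrix.frobeniusNormedAddCommGroup Matrix.frobeniusNormedSpace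
attribute [local instance] Matrix.frobeniusNormedRing Matrix.frobeniusNormedAlgebra

section Ring

variable {A : Type*} [Ring A] {a b c : A}

theorem Commute.commutator_anticommutator_right (h : Commute c a) (b : A) :
    a * (b * c + c * b) - (b * c + c * b) * a = c * (a * b - b * a) + (a * b - b * a) * c := by
  calc _ = c * (a * b - b * a) + (a * b - b * a) * c
          + ((a * c - c * a) * b + b * (a * c - c * a)) := by noncomm_ring
    _ = _ := by rw [sub_eq_zero.mpr h.symm.eq]; simp

theorem Commute.commutator_anticommutator_left (h : Commute c b) (a : A) :
    (c * a + a * c) * b - b * (c * a + a * c) = c * (a * b - b * a) + (a * b - b * a) * c := by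
  calc _ = c * (a * b - b * a) + (a * b - b * a) * c
          + (a * (c * b - b * c) + (c * b - b * c) * a) := by noncomm_ring
    _ = _ := by rw [sub_eq_zero.mpr h.eq]; simp

end Ring

theorem HasDerivAt.mul_sub_mul_comm {𝕜 𝔸 : Type*} [NontriviallyNormedField 𝕜] [NormedRing 𝔸]
    [NormedAlgebra 𝕜 𝔸] {f g : 𝕜 → 𝔸} {f' g' : 𝔸} {x : 𝕜}
    (hf : HasDerivAt f f' x) (hg : HasDerivAt g g' x) :
    HasDerivAt (fun u => f u * g u - g u * f u)
      ((f' * g x - g x * f') + (f x * g' - g' * f x)) x :=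
  ((hf.fun_mul hg).fun_sub (hg.fun_mul hf)).congr_deriv (by abel)

theorem commutator_deriv_eq_neg_anticommutator {𝕜 A : Type*} [Field 𝕜] [CharZero 𝕜] [Ring A]
    [Algebra 𝕜 A] {αp s τ η : 𝕜} {F W F' W' K : A}
    (hF' : F' = -s • (W * W * F + F * (W * W)) + τ • (W * F + F * W) - (2 * η) • F)
    (hW' : W' = -(αp / 2 * s) • (W * F + F * W) + (αp * τ) • F - η • W)
    (hK : K = s • ((αp / 2) • F + W * W) - τ • W + (3 / 2 * η) • (1 : A)) :
    (F' * W - W * F') + (F * W' - W' * F) = -((F * W - W * F) * K) - K * (F * W - W * F) := by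
  set L := F * W - W * F
  have hF'W : F' * W - W * F' =
      -s • (W * W * L + L * (W * W)) + τ • (W * L + L * W) - (2 * η) • L := by
    rw [← ((Commute.refl W).mul_left (Commute.refl W)).commutator_anticommutator_left F,
      ← (Commute.refl W).commutator_anticommutator_left F, hF']
    simp only [L, sub_mul, mul_sub, add_mul, mul_add, smul_mul_assoc, mul_smul_comm]
    module
  have hFW' : F * W' - W' * F = -(αp / 2 * s) • (F * L + L * F) - η • L := by
    rw [← (Commute.refl F).commutator_anticommutator_right W, hW']
    simp only [L, sub_mul, mul_sub, add_mul, mul_add, smul_mul_assoc, mul_smul_comm]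
    module
  rw [hF'W, hFW', hK]
  simp only [sub_mul, mul_sub, add_mul, mul_add, smul_mul_assoc, mul_smul_comm, mul_one, one_mul]
  module

theorem commutator_dynamics_general
    (n : ℕ) (αp σ η : ℝ) (τ : ℝ → ℝ)
    (Wp F : ℝ → Matrix (Fin n) (Fin n) ℝ)
    (hWp : ∀ t : ℝ, HasDerivAt Wp
      (-(αp / 2 * (1 + σ ^ 2)) • (Wp t * F t + F t * Wp t)
        + (αp * τ t) • F t - η • Wp t) t)
    (hF : ∀ t : ℝ, HasDerivAt F
      (-(1 + σ ^ 2) • (Wp t * Wp t * F t + F t * (Wp t * Wp t))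
        + τ t • (Wp t * F t + F t * Wp t) - (2 * η) • F t) t)
    (K : ℝ → Matrix (Fin n) (Fin n) ℝ)
    (hK : ∀ t : ℝ, K t = (1 + σ ^ 2) • ((αp / 2) • F t + Wp t * Wp t)
        - τ t • Wp t + (3 / 2 * η) • (1 : Matrix (Fin n) (Fin n) ℝ)) :
    ∀ t : ℝ, HasDerivAt (fun u => F u * Wp u - Wp u * F u)
      (-((F t * Wp t - Wp t * F t) * K t) - K t * (F t * Wp t - Wp t * F t)) t := fun t =>
  ((hF t).mul_sub_mul_comm (hWp t)).congr_deriv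
    (commutator_deriv_eq_neg_anticommutator rfl rfl (hK t))

theorem commutator_dynamics
    (n : ℕ) (hn : 0 < n) (αp σ η : ℝ) (τ : ℝ → ℝ)
    (Wp F : ℝ → Matrix (Fin n) (Fin n) ℝ)
    (hWp : ∀ t : ℝ, HasDerivAt Wp
      (-(αp / 2 * (1 + σ ^ 2)) • (Wp t * F t + F t * Wp t)
        + (αp * τ t) • F t - η • Wp t) t)
    (hF : ∀ t : ℝ, HasDerivAt F
      (-(1 + σ ^ 2) • (Wp t * Wp t * F t + F t * (Wp t * Wp t))
        + τ t • (Wp t * F t + F t * Wp t) - (2 * η) • F t) t)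
    (K : ℝ → Matrix (Fin n) (Fin n) ℝ)
    (hK : ∀ t : ℝ, K t = (1 + σ ^ 2) • ((αp / 2) • F t + Wp t * Wp t)
        - τ t • Wp t + (3 / 2 * η) • (1 : Matrix (Fin n) (Fin n) ℝ)) :
    ∀ t : ℝ, HasDerivAt (fun u => F u * Wp u - Wp u * F u)
      (-((F t * Wp t - Wp t * F t) * K t) - K t * (F t * Wp t - Wp t * F t)) t :=
  commutator_dynamics_general n αp σ η τ Wp F hWp hF K hK
end

section
/- Let α_p > 0, σ ≥ 0, η ≥ 0 be real constants, let τ : ℝ → ℝ be any function, and let p, s : ℝ → ℝ be differentiable functions satisfying for all t the decoupled eigenmode dynamics ṗ(t) = α_p s(t)(τ(t) − (1+σ²)p(t)) − η p(t) and ṡ(t) = 2 p(t) s(t)(τ(t) − (1+σ²)p(t)) − 2η s(t). Then for all t, s(t) − α_p⁻¹ p(t)² = e^{−2ηt}·(s(0) − α_p⁻¹ p(0)²). In particular, when η > 0 the trajectory approaches the invariant parabola s = α_p⁻¹ p². -/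
/-!
The quantity `q = s - α_p⁻¹ p²` satisfies the closed linear equation `q' = -2η q`: in `q'` the
terms carrying the common factor `p s (τ - (1 + σ²) p)` cancel, so `q` decays like `e^{-2ηt}`.
-/

open Real Filter Topology

theorem eq_exp_mul_of_hasDerivAt_const_mul {f : ℝ → ℝ} {k : ℝ}
    (hf : ∀ t, HasDerivAt f (k * f t) t) (t : ℝ) : f t = exp (k * t) * f 0 := by
  set g : ℝ → ℝ := fun x => exp (-(k * x)) * f x
  have hg : ∀ x, HasDerivAt g 0 x := fun x => by
    have hexp : HasDerivAt (fun x => exp (-(k * x))) (exp (-(k * x)) * -k) x := by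
      simpa using ((hasDerivAt_id x).const_mul k).neg.exp
    exact (hexp.mul (hf x)).congr_deriv (by ring)
  have hconst : g t = g 0 :=
    is_const_of_deriv_eq_zero (fun x => (hg x).differentiableAt) (fun x => (hg x).deriv) t 0
  calc f t = exp (k * t) * g t := by simp [g, ← mul_assoc, ← exp_add]
    _ = exp (k * t) * f 0 := by simp [hconst, g]

theorem tendsto_exp_mul_mul_const_atTop_of_neg {k : ℝ} (hk : k < 0) (c : ℝ) :
    Tendsto (fun t => exp (k * t) * c) atTop (𝓝 0) := by
  simpa using (tendsto_exp_atBot.comp (tendsto_id.const_mul_atTop_of_neg hk)).mul_const c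

theorem hasDerivAt_sub_inv_mul_sq {p s : ℝ → ℝ} {a r η t : ℝ} (ha : a ≠ 0)
    (hp : HasDerivAt p (a * s t * r - η * p t) t)
    (hs : HasDerivAt s (2 * p t * s t * r - 2 * η * s t) t) :
    HasDerivAt (fun t => s t - a⁻¹ * p t ^ 2) (-2 * η * (s t - a⁻¹ * p t ^ 2)) t := by
  refine (hs.sub ((hp.pow 2).const_mul a⁻¹)).congr_deriv ?_
  field_simp
  ring

theorem decoupled_integral_of_motion_general
    (αp σ η : ℝ) (hαp : 0 < αp)
    (τ p s : ℝ → ℝ)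
    (hp : ∀ t : ℝ, HasDerivAt p
      (αp * s t * (τ t - (1 + σ ^ 2) * p t) - η * p t) t)
    (hs : ∀ t : ℝ, HasDerivAt s
      (2 * p t * s t * (τ t - (1 + σ ^ 2) * p t) - 2 * η * s t) t) :
    (∀ t : ℝ, s t - αp⁻¹ * p t ^ 2
        = Real.exp (-2 * η * t) * (s 0 - αp⁻¹ * p 0 ^ 2))
      ∧ (0 < η →
          Filter.Tendsto (fun t => s t - αp⁻¹ * p t ^ 2) Filter.atTop (nhds 0)) := by
  have hdecay : ∀ t, s t - αp⁻¹ * p t ^ 2 = exp (-2 * η * t) * (s 0 - αp⁻¹ * p 0 ^ 2) :=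
    eq_exp_mul_of_hasDerivAt_const_mul (fun t => hasDerivAt_sub_inv_mul_sq hαp.ne' (hp t) (hs t))
  refine ⟨hdecay, fun hη => ?_⟩
  exact (tendsto_exp_mul_mul_const_atTop_of_neg (by linarith) _).congr fun t => (hdecay t).symm

theorem decoupled_integral_of_motion
    (αp σ η : ℝ) (hαp : 0 < αp) (hσ : 0 ≤ σ) (hη : 0 ≤ η)
    (τ p s : ℝ → ℝ)
    (hp : ∀ t : ℝ, HasDerivAt p
      (αp * s t * (τ t - (1 + σ ^ 2) * p t) - η * p t) t)
    (hs : ∀ t : ℝ, HasDerivAt s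
      (2 * p t * s t * (τ t - (1 + σ ^ 2) * p t) - 2 * η * s t) t) :
    (∀ t : ℝ, s t - αp⁻¹ * p t ^ 2
        = Real.exp (-2 * η * t) * (s 0 - αp⁻¹ * p 0 ^ 2))
      ∧ (0 < η →
          Filter.Tendsto (fun t => s t - αp⁻¹ * p t ^ 2) Filter.atTop (nhds 0)) :=
  decoupled_integral_of_motion_general αp σ η hαp τ p s hp hs
end

section
/- Let τ > 0, σ ≥ 0, and η be real with 0 < 4η(1+σ²) < τ², and define f(p) = p²(τ − (1+σ²)p) − η p, p₋ = (τ − √(τ² − 4η(1+σ²)))/(2(1+σ²)), and p₊ = (τ + √(τ² − 4η(1+σ²)))/(2(1+σ²)). Then the derivative of f satisfies f'(0) = −η < 0, f'(p₋) > 0, and f'(p₊) < 0. Consequently, for the scalar flow ṗ = f(p), the fixed points 0 and p₊ are linearly stable while p₋ is linearly unstable. -/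
/-!
Writing `a = 1 + σ²`, the field is `f p = -p (a p² - τ p + η)`, and `p₋, p₊` are the roots of the
quadratic factor. At such a root `a p² = τ p - η`, so `f' p = 2τp - 3ap² - η = 2η - τp`, which
equals `p (τ - 2ap) = ± p √(τ² - 4ηa)`. Both roots are positive since `√(τ² - 4ηa) < τ`,
hence `f'` is positive at `p₋` and negative at `p₊`.
-/

lemma hasDerivAt_reducedField (τ a η p : ℝ) :
    HasDerivAt (fun p => p ^ 2 * (τ - a * p) - η * p) (2 * τ * p - 3 * a * p ^ 2 - η) p := by
  have h := ((hasDerivAt_pow 2 p).mul (((hasDerivAt_id' p).const_mul a).const_sub τ)).sub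
    ((hasDerivAt_id' p).const_mul η)
  exact h.congr_deriv (by ring)

lemma deriv_reducedField_root {τ a η s : ℝ} (ha : a ≠ 0) (hs : s ^ 2 = τ ^ 2 - 4 * η * a) :
    deriv (fun p => p ^ 2 * (τ - a * p) - η * p) ((τ - s) / (2 * a)) =
      (τ - s) / (2 * a) * s := by
  rw [(hasDerivAt_reducedField τ a η _).deriv]
  field_simp
  linear_combination -hs

theorem reduced_dynamics_stability_general
    (τ σ η : ℝ) (hτ : 0 < τ)
    (hη : 0 < 4 * η * (1 + σ ^ 2)) (hlt : 4 * η * (1 + σ ^ 2) < τ ^ 2)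
    (f : ℝ → ℝ)
    (hf : ∀ p : ℝ, f p = p ^ 2 * (τ - (1 + σ ^ 2) * p) - η * p)
    (pm pp : ℝ)
    (hpm : pm = (τ - Real.sqrt (τ ^ 2 - 4 * η * (1 + σ ^ 2))) / (2 * (1 + σ ^ 2)))
    (hpp : pp = (τ + Real.sqrt (τ ^ 2 - 4 * η * (1 + σ ^ 2))) / (2 * (1 + σ ^ 2))) :
    deriv f 0 = -η ∧ deriv f 0 < 0 ∧ 0 < deriv f pm ∧ deriv f pp < 0 := by
  obtain rfl : f = fun p => p ^ 2 * (τ - (1 + σ ^ 2) * p) - η * p := funext hf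
  have ha : 0 < 1 + σ ^ 2 := by positivity
  have hη0 : 0 < η := by linarith [pos_of_mul_pos_left hη ha.le]
  set D := τ ^ 2 - 4 * η * (1 + σ ^ 2)
  have hD : 0 < D := sub_pos.2 hlt
  have hs : Real.sqrt D ^ 2 = D := Real.sq_sqrt hD.le
  have hs_lt : Real.sqrt D < τ := (Real.sqrt_lt' hτ).2 (by linarith)
  have hderiv_zero : deriv (fun p => p ^ 2 * (τ - (1 + σ ^ 2) * p) - η * p) 0 = -η := by
    simp [(hasDerivAt_reducedField τ (1 + σ ^ 2) η 0).deriv]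
  refine ⟨hderiv_zero, hderiv_zero ▸ neg_neg_of_pos hη0, ?_, ?_⟩
  · rw [hpm, deriv_reducedField_root ha.ne' hs]
    exact mul_pos (div_pos (sub_pos.2 hs_lt) (by positivity)) (Real.sqrt_pos.2 hD)
  · rw [hpp, ← sub_neg_eq_add τ, deriv_reducedField_root ha.ne' (by rw [neg_sq, hs])]
    exact mul_neg_of_pos_of_neg (div_pos (by linarith [Real.sqrt_nonneg D]) (by positivity))
      (neg_neg_of_pos (Real.sqrt_pos.2 hD))

theorem reduced_dynamics_stability
    (τ σ η : ℝ) (hτ : 0 < τ) (hσ : 0 ≤ σ)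
    (hη : 0 < 4 * η * (1 + σ ^ 2)) (hlt : 4 * η * (1 + σ ^ 2) < τ ^ 2)
    (f : ℝ → ℝ)
    (hf : ∀ p : ℝ, f p = p ^ 2 * (τ - (1 + σ ^ 2) * p) - η * p)
    (pm pp : ℝ)
    (hpm : pm = (τ - Real.sqrt (τ ^ 2 - 4 * η * (1 + σ ^ 2))) / (2 * (1 + σ ^ 2)))
    (hpp : pp = (τ + Real.sqrt (τ ^ 2 - 4 * η * (1 + σ ^ 2))) / (2 * (1 + σ ^ 2))) :
    deriv f 0 = -η ∧ deriv f 0 < 0 ∧ 0 < deriv f pm ∧ deriv f pp < 0 :=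
  reduced_dynamics_stability_general τ σ η hτ hη hlt f hf pm pp hpm hpp
end

section
/- Let λ_s > 0, λ_d ≠ 0, α_p > 0, and β > 0 be real constants. Define G : ℝ³ → ℝ³ by G(w, w_p, w_a) = (w_p·(w_a λ_d − w_p w λ_s), α_p·(w_a λ_d − w_p w λ_s)·w, β·(w − w_a)). Then G(w, w_p, w_a) = (0,0,0) if and only if either (w = 0 and w_a = 0, with w_p arbitrary) or (w_a = w and w_p = λ_d/λ_s). -/
/-!
The third component of `G` vanishes exactly when `w_a = w`, since `β ≠ 0`. On that diagonal the
common factor `w_a λ_d - w_p w λ_s` of the first two components becomes `w (λ_d - w_p λ_s)`, so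
the second component is `α_p w² (λ_d - w_p λ_s)`: either `w = 0`, which makes everything vanish,
or `w_p λ_s = λ_d`.
-/

theorem byol_fixed_point_iff {K : Type*} [Field K] {lams : K} (hlams : lams ≠ 0)
    (lamd w wp wa : K) :
    (wp * (wa * lamd - wp * w * lams) = 0 ∧ (wa * lamd - wp * w * lams) * w = 0 ∧ w = wa) ↔
      (w = 0 ∧ wa = 0) ∨ (wa = w ∧ wp = lamd / lams) := by
  rw [eq_div_iff hlams]
  have diag : w * lamd - wp * w * lams = w * (lamd - wp * lams) := by ring
  constructor
  · rintro ⟨-, hw, rfl⟩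
    rcases eq_or_ne w 0 with h0 | h0
    · exact .inl ⟨h0, h0⟩
    · rw [diag, mul_right_comm, mul_eq_zero, mul_self_eq_zero, or_iff_right h0, sub_eq_zero] at hw
      exact .inr ⟨rfl, hw.symm⟩
  · rintro (⟨rfl, rfl⟩ | ⟨rfl, hwp⟩) <;> simp [*]

theorem byol_3d_fixed_points_general
    (lams lamd αp β : ℝ)
    (hlams : 0 < lams) (hαp : 0 < αp) (hβ : 0 < β)
    (G : ℝ → ℝ → ℝ → ℝ × ℝ × ℝ)
    (hG : ∀ w wp wa : ℝ, G w wp wa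
      = (wp * (wa * lamd - wp * w * lams),
         αp * ((wa * lamd - wp * w * lams) * w),
         β * (w - wa))) :
    ∀ w wp wa : ℝ,
      G w wp wa = (0, 0, 0) ↔ (w = 0 ∧ wa = 0) ∨ (wa = w ∧ wp = lamd / lams) := by
  intro w wp wa
  rw [hG, Prod.mk.injEq, Prod.mk.injEq, mul_eq_zero_iff_left hαp.ne', mul_eq_zero_iff_left hβ.ne',
    sub_eq_zero]
  exact byol_fixed_point_iff hlams.ne' lamd w wp wa

theorem byol_3d_fixed_points
    (lams lamd αp β : ℝ)
    (hlams : 0 < lams) (hlamd : lamd ≠ 0) (hαp : 0 < αp) (hβ : 0 < β)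
    (G : ℝ → ℝ → ℝ → ℝ × ℝ × ℝ)
    (hG : ∀ w wp wa : ℝ, G w wp wa
      = (wp * (wa * lamd - wp * w * lams),
         αp * ((wa * lamd - wp * w * lams) * w),
         β * (w - wa))) :
    ∀ w wp wa : ℝ,
      G w wp wa = (0, 0, 0) ↔ (w = 0 ∧ wa = 0) ∨ (wa = w ∧ wp = lamd / lams) :=
  byol_3d_fixed_points_general lams lamd αp β hlams hαp hβ G hG
end

section
/- Let λ_s, λ_d, β be real constants and let w, w_p, w_a : [0, T] → ℝ be differentiable functions satisfying, for all t ∈ [0, T], ẇ(t) = w_p(t)·(w_a(t)λ_d − w_p(t)w(t)λ_s), ẇ_p(t) = (w_a(t)λ_d − w_p(t)w(t)λ_s)·w(t), and ẇ_a(t) = β(w(t) − w_a(t)). If w(0) = w_p(0) and the function t ↦ w_a(t)λ_d − w_p(t)w(t)λ_s is continuous on [0, T], then w(t) = w_p(t) for all t ∈ [0, T]. -/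
/-!
The difference `u = w - w_p` solves the scalar linear equation `u' = -c u`, where
`c = w_a λ_d - w_p w λ_s` is the common factor of both vector-field components. A continuous
coefficient is bounded on the compact interval, so Grönwall's inequality forces `u ≡ 0`
once `u(0) = 0`.
-/

open Set

theorem eq_zero_of_hasDerivWithinAt_smul_self {E : Type*} [NormedAddCommGroup E]
    [NormedSpace ℝ E] {u : ℝ → E} {c : ℝ → ℝ} {a b : ℝ} (hc : ContinuousOn c (Icc a b))
    (hu : ∀ t ∈ Icc a b, HasDerivWithinAt u (c t • u t) (Icc a b) t) (ha : u a = 0) :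
    ∀ t ∈ Icc a b, u t = 0 := by
  obtain ⟨K, hK⟩ := isCompact_Icc.exists_bound_of_continuousOn hc
  refine eq_zero_of_abs_deriv_le_mul_abs_self_of_eq_zero_right (K := K)
    (fun t ht => (hu t ht).continuousWithinAt)
    (fun t ht => (hu t (Ico_subset_Icc_self ht)).mono_of_mem_nhdsWithin
      (Icc_mem_nhdsGE_of_mem ht)) ha (fun t ht => ?_)
  rw [norm_smul]
  exact mul_le_mul_of_nonneg_right (hK t (Ico_subset_Icc_self ht)) (norm_nonneg _)

theorem byol_3d_diagonal_invariant_general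
    (T lams lamd : ℝ)
    (w wp wa : ℝ → ℝ)
    (hw : ∀ t ∈ Set.Icc (0:ℝ) T, HasDerivWithinAt w
      (wp t * (wa t * lamd - wp t * w t * lams)) (Set.Icc (0:ℝ) T) t)
    (hwp : ∀ t ∈ Set.Icc (0:ℝ) T, HasDerivWithinAt wp
      ((wa t * lamd - wp t * w t * lams) * w t) (Set.Icc (0:ℝ) T) t)
    (h0 : w 0 = wp 0)
    (hcont : ContinuousOn (fun t => wa t * lamd - wp t * w t * lams)
      (Set.Icc (0:ℝ) T)) :
    ∀ t ∈ Set.Icc (0:ℝ) T, w t = wp t := by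
  have hdiff : ∀ t ∈ Icc (0:ℝ) T, HasDerivWithinAt (fun s => w s - wp s)
      (-(wa t * lamd - wp t * w t * lams) • (w t - wp t)) (Icc (0:ℝ) T) t := by
    intro t ht
    refine ((hw t ht).sub (hwp t ht)).congr_deriv ?_
    rw [smul_eq_mul]
    ring
  have hzero := eq_zero_of_hasDerivWithinAt_smul_self hcont.neg hdiff (sub_eq_zero.2 h0)
  exact fun t ht => sub_eq_zero.1 (hzero t ht)

theorem byol_3d_diagonal_invariant
    (T lams lamd β : ℝ) (hT : 0 ≤ T)
    (w wp wa : ℝ → ℝ)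
    (hw : ∀ t ∈ Set.Icc (0:ℝ) T, HasDerivWithinAt w
      (wp t * (wa t * lamd - wp t * w t * lams)) (Set.Icc (0:ℝ) T) t)
    (hwp : ∀ t ∈ Set.Icc (0:ℝ) T, HasDerivWithinAt wp
      ((wa t * lamd - wp t * w t * lams) * w t) (Set.Icc (0:ℝ) T) t)
    (hwa : ∀ t ∈ Set.Icc (0:ℝ) T, HasDerivWithinAt wa
      (β * (w t - wa t)) (Set.Icc (0:ℝ) T) t)
    (h0 : w 0 = wp 0)
    (hcont : ContinuousOn (fun t => wa t * lamd - wp t * w t * lams)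
      (Set.Icc (0:ℝ) T)) :
    ∀ t ∈ Set.Icc (0:ℝ) T, w t = wp t :=
  byol_3d_diagonal_invariant_general T lams lamd w wp wa hw hwp h0 hcont
end
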